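/- Let p, q be idempotents in a ring R with p − q Drazin invertible. Then p − pq is Drazin invertible with (p − pq)^D = p ((p−q)^D)³. -/

import Mathlib

/-!
Write `a = p - q` and `b = a^D`. Then `p - pq = pa`, and idempotency of `p` and `q` gives that `p`
commutes with `a² = p + q - pq - qp` and that `pap = pa²`; consequently `(pa)^(n+1) = pa^(2n+1)`.
Since `(a²)^D = b²` and a Drazin inverse lies in the double commutant, `p` also commutes with `b²`
and with `ab = a²b²`. From these relations `(pa)(pb³) = (pb³)(pa) = pb`, `(pb³)(pa)(pb³) = pb³`,
and `pa - (pa)²(pb³) = pa(1 - ab)`, whose powers `pa^(2n+1)(1 - ab)` vanish for large `n`.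
-/

/-- `b` is the Drazin inverse of `a`. -/
def IsDrazinInverse {R : Type*} [Ring R] (a b : R) : Prop :=
  a * b = b * a ∧ b * a * b = b ∧ IsNilpotent (a - a * a * b)

theorem mul_pow_succ_of_mul_mul_eq {M : Type*} [Monoid M] {p a : M}
    (hpap : p * a * p = p * (a * a)) (n : ℕ) : (p * a) ^ (n + 1) = p * a ^ (2 * n + 1) := by
  induction n with
  | zero => simp
  | succ n ih =>
    calc (p * a) ^ (n + 1 + 1) = p * a * p * a ^ (2 * n + 1) := by
          rw [pow_succ', ih, ← mul_assoc]
      _ = p * a ^ (2 * (n + 1) + 1) := by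
          rw [hpap, mul_assoc, ← sq, ← pow_add]
          congr 2
          ring

namespace IsDrazinInverse

variable {R : Type*} [Ring R] {a b : R}

theorem commute (h : IsDrazinInverse a b) : Commute a b := h.1

theorem mul_mul_self (h : IsDrazinInverse a b) : a * b * b = b := by
  rw [h.commute.eq]
  exact h.2.1

theorem mul_self_mul (h : IsDrazinInverse a b) : b * b * a = b := by
  rw [mul_assoc, ← h.commute.eq, ← mul_assoc]
  exact h.2.1

theorem isIdempotentElem_mul (h : IsDrazinInverse a b) : IsIdempotentElem (a * b) := by
  rw [IsIdempotentElem, show a * b * (a * b) = a * (b * a * b) by simp only [mul_assoc], h.2.1]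

theorem commute_one_sub (h : IsDrazinInverse a b) : Commute a (1 - a * b) :=
  (Commute.one_right a).sub_right ((Commute.refl a).mul_right h.commute)

theorem pow_mul_pow_succ (h : IsDrazinInverse a b) (m : ℕ) : a ^ m * b ^ (m + 1) = b := by
  induction m with
  | zero => simp
  | succ m ih =>
    calc a ^ (m + 1) * b ^ (m + 1 + 1) = a ^ m * (a * b ^ (m + 1)) * b := by
          rw [pow_succ, pow_succ b (m + 1)]
          simp only [mul_assoc]
      _ = a ^ m * b ^ (m + 1) * a * b := by
          rw [(h.commute.pow_right (m + 1)).eq]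
          simp only [mul_assoc]
      _ = b := by rw [ih, h.2.1]

theorem pow_succ_mul_one_sub (h : IsDrazinInverse a b) (m : ℕ) :
    a ^ (m + 1) * (1 - a * b) = (a - a * a * b) ^ (m + 1) := by
  rw [show a - a * a * b = a * (1 - a * b) by noncomm_ring, h.commute_one_sub.mul_pow,
    h.isIdempotentElem_mul.one_sub.pow_succ_eq]

theorem exists_pow_mul_one_sub_eq_zero (h : IsDrazinInverse a b) :
    ∃ m : ℕ, a ^ m * (1 - a * b) = 0 := by
  obtain ⟨k, hk⟩ := h.2.2
  exact ⟨k + 1, by rw [h.pow_succ_mul_one_sub, pow_succ, hk, zero_mul]⟩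

theorem commute_of_commute (h : IsDrazinInverse a b) {x : R} (hx : Commute x a) :
    Commute x b := by
  obtain ⟨m, hm⟩ := h.exists_pow_mul_one_sub_eq_zero
  have hm' : (1 - a * b) * a ^ m = 0 := by
    rw [← (h.commute_one_sub.pow_left m).eq, hm]
  have hb : a ^ m * b ^ (m + 1) = b := h.pow_mul_pow_succ m
  have hb' : b ^ (m + 1) * a ^ m = b := by
    rw [← (h.commute.pow_pow m (m + 1)).eq, hb]
  -- `b x - x b = b x (1 - ab) - (1 - ab) x b`, and both terms vanish.
  have hleft : (1 - a * b) * x * b = 0 := by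
    calc (1 - a * b) * x * b = (1 - a * b) * x * (a ^ m * b ^ (m + 1)) := by rw [hb]
      _ = (1 - a * b) * (a ^ m * x) * b ^ (m + 1) := by
          rw [← (hx.pow_right m).eq]; simp only [mul_assoc]
      _ = 0 := by simp only [← mul_assoc, hm', zero_mul]
  have hright : b * x * (1 - a * b) = 0 := by
    calc b * x * (1 - a * b) = b ^ (m + 1) * a ^ m * x * (1 - a * b) := by rw [hb']
      _ = b ^ (m + 1) * (x * a ^ m) * (1 - a * b) := by
          rw [(hx.pow_right m).eq]; simp only [mul_assoc]
      _ = 0 := by simp only [mul_assoc, hm, mul_zero]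
  have hxb : x * b = a * b * x * b := by
    rw [← sub_eq_zero, ← hleft]; noncomm_ring
  have hbx : b * x = b * x * a * b := by
    rw [← sub_eq_zero, ← hright]; noncomm_ring
  calc x * b = b * (a * x) * b := by rw [hxb, h.commute.eq]; simp only [mul_assoc]
    _ = b * x := by rw [← hx.eq, hbx, mul_assoc b x a]

theorem mul_self (h : IsDrazinInverse a b) : IsDrazinInverse (a * a) (b * b) := by
  refine ⟨((h.commute.mul_left h.commute).mul_right (h.commute.mul_left h.commute)).eq, ?_, ?_⟩
  · rw [show b * b * (a * a) * (b * b) = b * b * a * (a * b * b) by simp only [mul_assoc],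
      h.mul_self_mul, h.mul_mul_self]
  · have hfac : a * a - a * a * (a * a) * (b * b) = (a - a * a * b) * a := by
      rw [show a * a * (a * a) * (b * b) = a * a * a * (a * b * b) by simp only [mul_assoc],
        h.mul_mul_self, sub_mul, mul_assoc (a * a) b a, ← h.commute.eq]
      noncomm_ring
    have hcomm : Commute (a - a * a * b) a :=
      (Commute.refl a).sub_left (((Commute.refl a).mul_left (Commute.refl a)).mul_left
        h.commute.symm)
    rw [hfac]
    exact hcomm.isNilpotent_mul_right h.2.2

theorem mul_left_pow_three (h : IsDrazinInverse a b) {p : R} (hc : Commute p (a * a))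
    (hpap : p * a * p = p * (a * a)) : IsDrazinInverse (p * a) (p * b ^ 3) := by
  have hpbb : Commute p (b * b) := h.mul_self.commute_of_commute hc
  have haabb : a * a * (b * b) = a * b := by
    rw [show a * a * (b * b) = a * (a * b * b) by simp only [mul_assoc], h.mul_mul_self]
  have hpab : Commute p (a * b) := haabb ▸ hc.mul_right hpbb
  have hb3 : b ^ 3 = b * (b * b) := by rw [pow_succ', sq]
  have hpbp : p * b * p = p * (a * b) :=
    calc p * b * p = p * (b * b) * a * p := by rw [mul_assoc p (b * b) a, h.mul_self_mul]
      _ = b * b * (p * a * p) := by rw [hpbb.eq]; simp only [mul_assoc]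
      _ = a * a * (b * b) * p := by
          rw [hpap, hc.eq, ← mul_assoc, ← h.mul_self.commute.eq]
      _ = p * (a * b) := by rw [haabb, hpab.eq]
  have hxy : p * a * (p * b ^ 3) = p * b :=
    calc p * a * (p * b ^ 3) = p * (a * (a * b * b) * b) := by
          rw [← mul_assoc, hpap, hb3]; simp only [mul_assoc]
      _ = p * b := by rw [h.mul_mul_self, h.mul_mul_self]
  have hyx : p * b ^ 3 * (p * a) = p * b :=
    calc p * b ^ 3 * (p * a) = p * b * (p * (b * b)) * a := by
          rw [hb3, hpbb.eq]; simp only [mul_assoc]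
      _ = p * (a * b) * (b * b * a) := by rw [← hpbp]; simp only [mul_assoc]
      _ = p * b := by rw [h.mul_self_mul, mul_assoc, h.mul_mul_self]
  refine ⟨hxy.trans hyx.symm, ?_, ?_⟩
  · calc p * b ^ 3 * (p * a) * (p * b ^ 3) = p * b * p * (b * (b * b)) := by
          rw [hyx, hb3]; simp only [mul_assoc]
      _ = p * b ^ 3 := by
          rw [hpbp, hb3, show p * (a * b) * (b * (b * b)) = p * (a * b * b * (b * b)) by
            simp only [mul_assoc], h.mul_mul_self]
  · have hdiff : p * a - p * a * (p * a) * (p * b ^ 3) = p * a * (1 - a * b) := by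
      rw [mul_assoc (p * a) (p * a), hxy, ← mul_assoc, hpap]
      noncomm_ring
    have hcomm : Commute (p * a) (1 - a * b) :=
      (Commute.one_right _).sub_right (hpab.mul_left ((Commute.refl a).mul_right h.commute))
    obtain ⟨m, hm⟩ := h.exists_pow_mul_one_sub_eq_zero
    refine ⟨m + 1, ?_⟩
    rw [hdiff, hcomm.mul_pow, mul_pow_succ_of_mul_mul_eq hpap,
      h.isIdempotentElem_mul.one_sub.pow_succ_eq, show 2 * m + 1 = m + 1 + m by ring, pow_add]
    simp only [mul_assoc, hm, mul_zero]

end IsDrazinInverse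

theorem stmt8 {R : Type*} [Ring R] (p q d : R) (hp : p * p = p) (hq : q * q = q)
    (hd : IsDrazinInverse (p - q) d) :
    IsDrazinInverse (p - p * q) (p * d ^ 3) := by
  have hc : p * ((p - q) * (p - q)) = (p - q) * (p - q) * p := by
    linear_combination (norm := noncomm_ring) q * hp - hp * q + p * hq - hq * p
  have hpap : p * (p - q) * p = p * ((p - q) * (p - q)) := by
    linear_combination (norm := noncomm_ring) hp * q - p * hq
  rw [show p - p * q = p * (p - q) by rw [mul_sub, hp]]
  exact hd.mul_left_pow_three hc hpap
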